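/- For every infinite-dimensional Banach space X and every infinite cardinal κ, there exists a Banach space Y with dim Y = κ such that X ∼_f Y (X and Y are finitely equivalent). In particular, every infinite-dimensional Banach space is finitely equivalent to a separable Banach space. -/

import Mathlib

noncomputable section

universe u v

/-- A packaged real Banach space. -/
structure BanachSpace : Type (u + 1) where
  carrier : Type u
  [norm : NormedAddCommGroup carrier]
  [smulR : NormedSpace ℝ carrier]
  [complete : CompleteSpace carrier]

attribute [instance] BanachSpace.norm BanachSpace.smulR BanachSpace.complete

/-- The dimension of a normed space: the least cardinality of a subset whose closed linear
span is the whole space (for infinite-dimensional spaces this is the density character). -/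
noncomputable def bdim (X : Type u) [SeminormedAddCommGroup X] [NormedSpace ℝ X] :
    Cardinal.{u} :=
  sInf {c : Cardinal.{u} |
    ∃ A : Set X, Cardinal.mk A = c ∧ (Submodule.span ℝ A).topologicalClosure = ⊤}

/-- `X` is *finitely representable* in `Y`: every finite-dimensional subspace of `X` is
`(1+ε)`-isomorphic to a subspace of `Y`, for every `ε > 0`. -/
def FinitelyRepresentable (X : Type u) (Y : Type v)
    [NormedAddCommGroup X] [NormedSpace ℝ X] [NormedAddCommGroup Y] [NormedSpace ℝ Y] :
    Prop :=
  ∀ ε : ℝ, 0 < ε → ∀ A : Submodule ℝ X, FiniteDimensional ℝ A →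
    ∃ (B : Submodule ℝ Y) (u : A ≃L[ℝ] B),
      ‖(u : A →L[ℝ] B)‖ * ‖(u.symm : B →L[ℝ] A)‖ < 1 + ε

/-- `X` and `Y` are *finitely equivalent*: each is finitely representable in the other. -/
def FinitelyEquivalent (X : Type u) (Y : Type v)
    [NormedAddCommGroup X] [NormedSpace ℝ X] [NormedAddCommGroup Y] [NormedSpace ℝ Y] :
    Prop :=
  FinitelyRepresentable X Y ∧ FinitelyRepresentable Y X


/-!
The space `Y` is found inside an ultrapower `X^𝒰`, which contains `X` isometrically (diagonally)
and is finitely representable in `X`: for fixed representatives, the norms of linear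
combinations converge along `𝒰` uniformly in the coefficients, being equi-Lipschitz (Ascoli).
Since the norm profiles of `n`-tuples form a separable space, countably many vectors of `X`
already copy every finite-dimensional subspace of `X` up to any `ε`. Over the finite subsets of
a set of size `κ`, a bounded `1`-separated sequence of `X` (Riesz) yields `κ` bounded, pairwise
`1`-separated points of `X^𝒰`. The closed span of the diagonal image of the countable set and of
these points is finitely equivalent to `X`, and its dimension is `κ`: at most `κ` vectors span
it, and a dense subset must separate the `κ` points.
-/

open Filter Topology Metric Set
open scoped ENNReal NNReal

section NormProfile

variable {V W : Type*} [SeminormedAddCommGroup V] [NormedSpace ℝ V]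
  [SeminormedAddCommGroup W] [NormedSpace ℝ W]

-- `Fin n → ℝ` carries the sup norm. The sup distance between the profiles of two tuples bounds
-- the distortion of the linear map sending one tuple to the other (`abs_norm_sum_smul_sub_le`).
def normProfile {n : ℕ} (x : Fin n → V) : C(closedBall (0 : Fin n → ℝ) 1, ℝ) :=
  ⟨fun a => ‖∑ j, (a : Fin n → ℝ) j • x j‖, by
    refine continuous_norm.comp (continuous_finsetSum _ fun j _ => ?_)
    exact ((continuous_apply j).comp continuous_subtype_val).smul continuous_const⟩

lemma normProfile_apply {n : ℕ} (x : Fin n → V) (a : closedBall (0 : Fin n → ℝ) 1) :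
    normProfile x a = ‖∑ j, (a : Fin n → ℝ) j • x j‖ := rfl

lemma normProfile_comp_linearIsometry {n : ℕ} (L : V →ₗᵢ[ℝ] W) (x : Fin n → V) :
    normProfile (L ∘ x) = normProfile x := by
  ext a
  simp only [normProfile_apply, Function.comp_apply, ← map_smul, ← map_sum,
    LinearIsometry.norm_map]

lemma norm_sum_smul_smul {n : ℕ} (c : ℝ) (a : Fin n → ℝ) (x : Fin n → V) :
    ‖∑ j, (c • a) j • x j‖ = |c| * ‖∑ j, a j • x j‖ := by
  simp only [Pi.smul_apply, smul_eq_mul, ← smul_smul, ← Finset.smul_sum, norm_smul,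
    Real.norm_eq_abs]

lemma abs_norm_sum_smul_sub_le {n : ℕ} (x : Fin n → V) (y : Fin n → W) (a : Fin n → ℝ) :
    |‖∑ j, a j • y j‖ - ‖∑ j, a j • x j‖| ≤ dist (normProfile x) (normProfile y) * ‖a‖ := by
  rcases eq_or_ne a 0 with rfl | ha
  · simp
  have hna : 0 < ‖a‖ := norm_pos_iff.2 ha
  have hmem : ‖a‖⁻¹ • a ∈ closedBall (0 : Fin n → ℝ) 1 := by
    rw [mem_closedBall_zero_iff, norm_smul, norm_inv, norm_norm, inv_mul_cancel₀ hna.ne']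
  have h := ContinuousMap.dist_apply_le_dist (f := normProfile x) (g := normProfile y)
    ⟨_, hmem⟩
  rw [Real.dist_eq, abs_sub_comm, normProfile_apply, normProfile_apply, norm_sum_smul_smul,
    norm_sum_smul_smul, abs_inv, abs_norm,
    ← mul_sub, abs_mul, abs_of_pos (inv_pos.2 hna), inv_mul_le_iff₀ hna] at h
  linarith

lemma lipschitzWith_normProfile {n : ℕ} (x : Fin n → V) {M : ℝ≥0} (hM : ∑ j, ‖x j‖ ≤ M) :
    LipschitzWith M (normProfile x) := LipschitzWith.of_dist_le_mul fun a b => by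
  rw [Real.dist_eq, normProfile_apply, normProfile_apply, Subtype.dist_eq, dist_eq_norm]
  calc |‖∑ j, (a : Fin n → ℝ) j • x j‖ - ‖∑ j, (b : Fin n → ℝ) j • x j‖|
      ≤ ‖∑ j, ((a : Fin n → ℝ) - b) j • x j‖ := by
        simpa [sub_smul] using abs_norm_sub_norm_le _ _
    _ ≤ ∑ j, ‖(a : Fin n → ℝ) - b‖ * ‖x j‖ := norm_sum_le_of_le _ fun j _ => by
        rw [norm_smul]; gcongr; exact norm_le_pi_norm _ j
    _ ≤ M * ‖(a : Fin n → ℝ) - b‖ := by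
        rw [← Finset.mul_sum, mul_comm]; gcongr

end NormProfile

section Representability

variable {V W : Type*} [NormedAddCommGroup V] [NormedSpace ℝ V]
  [NormedAddCommGroup W] [NormedSpace ℝ W]

lemma exists_continuousLinearEquiv_of_abs_norm_sub_le (T : V →ₗ[ℝ] W) {η : ℝ} (hη₀ : 0 ≤ η)
    (hη₁ : η < 1) (hT : ∀ x, |‖T x‖ - ‖x‖| ≤ η * ‖x‖) :
    ∃ (B : Submodule ℝ W) (u : V ≃L[ℝ] B),
      ‖(u : V →L[ℝ] B)‖ ≤ 1 + η ∧ ‖(u.symm : B →L[ℝ] V)‖ ≤ (1 - η)⁻¹ := by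
  have upper : ∀ x, ‖T x‖ ≤ (1 + η) * ‖x‖ := fun x => by linarith [(abs_le.1 (hT x)).2]
  have lower : ∀ x, (1 - η) * ‖x‖ ≤ ‖T x‖ := fun x => by linarith [(abs_le.1 (hT x)).1]
  have hinj : Function.Injective T := by
    refine (injective_iff_map_eq_zero T).2 fun x hx => norm_le_zero_iff.1 ?_
    have := lower x
    rw [hx, norm_zero] at this
    nlinarith [norm_nonneg x]
  let e := LinearEquiv.ofInjective T hinj
  have he : ∀ x, ‖e x‖ = ‖T x‖ := fun _ => rfl
  have he_symm : ∀ z, ‖e.symm z‖ ≤ (1 - η)⁻¹ * ‖z‖ := fun z => by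
    have := lower (e.symm z)
    rwa [← he, e.apply_symm_apply, ← le_inv_mul_iff₀ (by linarith)] at this
  refine ⟨LinearMap.range T, e.toContinuousLinearEquivOfBounds (1 + η) (1 - η)⁻¹
    (fun x => (he x).trans_le (upper x)) he_symm, ?_, ?_⟩
  · exact ContinuousLinearMap.opNorm_le_bound _ (by linarith) upper
  · exact ContinuousLinearMap.opNorm_le_bound _ (inv_nonneg.2 (by linarith)) he_symm

theorem FinitelyRepresentable.of_normProfile
    (h : ∀ (n : ℕ) (x : Fin n → V) (δ : ℝ), 0 < δ →
      ∃ y : Fin n → W, dist (normProfile x) (normProfile y) < δ) :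
    FinitelyRepresentable V W := by
  intro ε hε A hA
  let n := Module.finrank ℝ A
  let b : Module.Basis (Fin n) ℝ A := Module.finBasis ℝ A
  let coords : A →L[ℝ] (Fin n → ℝ) := LinearMap.toContinuousLinearMap b.equivFun.toLinearMap
  -- the distortion `η` is chosen so that `(1 + η) / (1 - η) = 1 + 2ε/3`
  set η := ε / (ε + 3) with hη
  have hη0 : 0 < η := by positivity
  obtain ⟨y, hy⟩ := h n (fun j => (b j : V)) (η / (‖coords‖ + 1)) (by positivity)
  have hT : ∀ x : A, |‖b.constr ℝ y x‖ - ‖x‖| ≤ η * ‖x‖ := fun x => by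
    have hx : (x : V) = ∑ j, b.equivFun x j • (b j : V) := by
      conv_lhs => rw [← b.sum_equivFun x]
      push_cast; rfl
    have key := abs_norm_sum_smul_sub_le (fun j => (b j : V)) y (b.equivFun x)
    rw [← hx, Submodule.norm_coe] at key
    rw [Module.Basis.constr_apply_fintype]
    refine key.trans ?_
    have hcoords : ‖b.equivFun x‖ ≤ ‖coords‖ * ‖x‖ := coords.le_opNorm x
    calc dist (normProfile fun j => (b j : V)) (normProfile y) * ‖b.equivFun x‖
        ≤ η / (‖coords‖ + 1) * ((‖coords‖ + 1) * ‖x‖) := by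
          gcongr; linarith [norm_nonneg x]
      _ = η * ‖x‖ := by field_simp
  have hη1 : η * (ε + 3) = ε := by rw [hη]; field_simp
  obtain ⟨B, u, hu, husymm⟩ :=
    exists_continuousLinearEquiv_of_abs_norm_sub_le _ hη0.le (by nlinarith) hT
  refine ⟨B, u, ?_⟩
  calc ‖(u : A →L[ℝ] B)‖ * ‖(u.symm : B →L[ℝ] A)‖ ≤ (1 + η) * (1 - η)⁻¹ := by
        gcongr
    _ < 1 + ε := by
      rw [mul_inv_lt_iff₀ (by nlinarith)]
      nlinarith

end Representability

lemma exists_countable_range_subset_closure_image {α β : Type*} [TopologicalSpace β]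
    [SecondCountableTopology β] (f : α → β) :
    ∃ s : Set α, s.Countable ∧ range f ⊆ closure (f '' s) := by
  obtain ⟨d, hdc, hd⟩ := TopologicalSpace.exists_countable_dense (range f)
  refine ⟨rangeSplitting f '' d, hdc.image _, ?_⟩
  rw [← image_comp, comp_rangeSplitting]
  exact Subtype.dense_iff.1 hd

lemma exists_countable_forall_dist_normProfile_lt (V : Type*) [NormedAddCommGroup V]
    [NormedSpace ℝ V] :
    ∃ C : Set V, C.Countable ∧ ∀ (n : ℕ) (x : Fin n → V) (δ : ℝ), 0 < δ →
      ∃ y : Fin n → V, (∀ j, y j ∈ C) ∧ dist (normProfile x) (normProfile y) < δ := by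
  -- `C(closedBall 0 1, ℝ)` is separable, so countably many profiles are dense among all of them
  choose T hTc hT using fun n =>
    exists_countable_range_subset_closure_image (normProfile (V := V) (n := n))
  refine ⟨⋃ n, ⋃ t ∈ T n, range t,
    countable_iUnion fun n => (hTc n).biUnion fun t _ => countable_range t, fun n x δ hδ => ?_⟩
  obtain ⟨_, ⟨y, hy, rfl⟩, hxy⟩ := Metric.mem_closure_iff.1 (hT n ⟨x, rfl⟩) δ hδ
  exact ⟨y, fun j => mem_iUnion.2 ⟨n, mem_biUnion hy ⟨j, rfl⟩⟩, hxy⟩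

section

variable {I : Type*} (𝒰 : Ultrafilter I) (X : Type*) [NormedAddCommGroup X] [NormedSpace ℝ X]

def ultrapowerNull : Submodule ℝ (lp (fun _ : I => X) ∞) where
  carrier := {f | Tendsto (fun i => ‖f i‖) 𝒰 (𝓝 0)}
  zero_mem' := by simp
  add_mem' {f g} hf hg := squeeze_zero (fun i => norm_nonneg _)
    (fun i => norm_add_le (f i) (g i)) (by simpa using hf.add hg)
  smul_mem' c f hf := by simpa [norm_smul] using hf.const_mul ‖c‖

lemma isClosed_ultrapowerNull : IsClosed (ultrapowerNull 𝒰 X : Set (lp (fun _ : I => X) ∞)) := by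
  refine isClosed_of_closure_subset fun f hf => Metric.tendsto_nhds.2 fun ε hε => ?_
  obtain ⟨g, hg, hfg⟩ := Metric.mem_closure_iff.1 hf (ε / 2) (half_pos hε)
  filter_upwards [Metric.tendsto_nhds.1 hg (ε / 2) (half_pos hε)] with i hi
  rw [Real.dist_0_eq_abs, abs_norm] at hi ⊢
  have hfg_i : ‖f i - g i‖ ≤ ‖f - g‖ := lp.norm_apply_le_norm ENNReal.top_ne_zero (f - g) i
  calc ‖f i‖ ≤ ‖g i‖ + ‖f i - g i‖ := norm_le_insert' _ _
    _ < ε := by rw [dist_eq_norm] at hfg; linarith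

instance : IsClosed (ultrapowerNull 𝒰 X : Set (lp (fun _ : I => X) ∞)) :=
  isClosed_ultrapowerNull 𝒰 X

abbrev Ultrapower : Type _ := lp (fun _ : I => X) ∞ ⧸ ultrapowerNull 𝒰 X

end

namespace Ultrapower

variable {I : Type*} {𝒰 : Ultrafilter I} {X : Type*} [NormedAddCommGroup X] [NormedSpace ℝ X]

lemma norm_mk_of_tendsto {f : lp (fun _ : I => X) ∞} {L : ℝ}
    (hL : Tendsto (fun i => ‖f i‖) 𝒰 (𝓝 L)) :
    ‖(Submodule.Quotient.mk f : Ultrapower 𝒰 X)‖ = L := by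
  have hL0 : 0 ≤ L := ge_of_tendsto' hL fun i => norm_nonneg _
  refine le_antisymm (le_of_forall_pos_le_add fun ε hε => ?_)
    (le_of_forall_pos_le_add fun ε hε => ?_)
  · -- truncating `f` where its norm exceeds `L + ε` does not change its class
    let s := {i | ‖f i‖ < L + ε}
    let g : lp (fun _ : I => X) ∞ := ⟨s.indicator f, memℓp_infty ⟨‖f‖, by
      rintro _ ⟨i, rfl⟩
      exact (norm_indicator_le_norm_self _ _).trans
        (lp.norm_apply_le_norm ENNReal.top_ne_zero f i)⟩⟩
    have hgf : (Submodule.Quotient.mk g : Ultrapower 𝒰 X) = Submodule.Quotient.mk f := by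
      refine (Submodule.Quotient.eq _).2 (tendsto_const_nhds.congr' ?_)
      filter_upwards [hL.eventually (gt_mem_nhds (lt_add_of_pos_right L hε))] with i hi
      rw [lp.coeFn_sub, Pi.sub_apply]
      simp [g, Set.indicator_of_mem (show i ∈ s from hi)]
    rw [← hgf]
    refine (Submodule.Quotient.norm_mk_le _ g).trans
      (lp.norm_le_of_forall_le (by positivity) fun i => ?_)
    by_cases hi : i ∈ s
    · simpa [g, hi] using hi.le
    · simpa [g, hi] using by positivity
  · obtain ⟨m, hm, hmf⟩ :=
      Submodule.Quotient.norm_mk_lt (Submodule.Quotient.mk f : Ultrapower 𝒰 X) hε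
    have hfm : Tendsto (fun i => ‖(f - m) i‖) 𝒰 (𝓝 0) := (Submodule.Quotient.eq _).1 hm.symm
    refine (le_of_tendsto' (by simpa using hL.sub hfm) fun i => ?_).trans hmf.le
    calc ‖f i‖ - ‖(f - m) i‖ ≤ ‖m i‖ := by
          rw [lp.coeFn_sub, Pi.sub_apply]; linarith [norm_sub_norm_le (f i) (m i)]
      _ ≤ ‖m‖ := lp.norm_apply_le_norm ENNReal.top_ne_zero m i

lemma tendsto_norm_mk (f : lp (fun _ : I => X) ∞) :
    Tendsto (fun i => ‖f i‖) 𝒰 (𝓝 ‖(Submodule.Quotient.mk f : Ultrapower 𝒰 X)‖) := by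
  have hbdd : ↑(𝒰.map fun i => ‖f i‖) ≤ 𝓟 (Icc 0 ‖f‖) := by
    rw [le_principal_iff, Ultrafilter.coe_map, mem_map]
    exact univ_mem' fun i => ⟨norm_nonneg _, lp.norm_apply_le_norm ENNReal.top_ne_zero f i⟩
  obtain ⟨L, -, hL⟩ := isCompact_Icc.ultrafilter_le_nhds _ hbdd
  rwa [norm_mk_of_tendsto hL]

variable (𝒰 X) in
def diag : X →ₗᵢ[ℝ] Ultrapower 𝒰 X where
  toFun x := Submodule.Quotient.mk ⟨fun _ => x, memℓp_infty ⟨‖x‖, by rintro _ ⟨_, rfl⟩; rfl⟩⟩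
  map_add' x y := by rw [← Submodule.Quotient.mk_add]; rfl
  map_smul' c x := by rw [RingHom.id_apply, ← Submodule.Quotient.mk_smul]; rfl
  norm_map' x := norm_mk_of_tendsto tendsto_const_nhds

lemma tendsto_normProfile {n : ℕ} (f : Fin n → lp (fun _ : I => X) ∞) :
    Tendsto (fun i => normProfile fun j => f j i) 𝒰
      (𝓝 (normProfile fun j => (Submodule.Quotient.mk (f j) : Ultrapower 𝒰 X))) := by
  let M : ℝ≥0 := ⟨∑ j, ‖f j‖, by positivity⟩
  have hequi : Equicontinuous fun i => ⇑(normProfile fun j => f j i) :=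
    (LipschitzWith.uniformEquicontinuous _ M fun i => lipschitzWith_normProfile _
      (Finset.sum_le_sum fun j _ =>
        lp.norm_apply_le_norm ENNReal.top_ne_zero (f j) i)).equicontinuous
  rw [ContinuousMap.tendsto_iff_tendstoUniformly]
  refine UniformFun.tendsto_iff_tendstoUniformly.1 ((hequi.tendsto_uniformFun_iff_pi _ _).2
    (tendsto_pi_nhds.2 fun a => ?_))
  have hmk : (Submodule.Quotient.mk (∑ j, (a : Fin n → ℝ) j • f j) : Ultrapower 𝒰 X) =
      ∑ j, (a : Fin n → ℝ) j • Submodule.Quotient.mk (f j) := by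
    simp only [← Submodule.mkQ_apply, map_sum, map_smul]
  have hcoe : ∀ i, (∑ j, (a : Fin n → ℝ) j • f j) i = ∑ j, (a : Fin n → ℝ) j • f j i :=
    fun i => by rw [lp.coeFn_sum, Finset.sum_apply]; rfl
  have h := tendsto_norm_mk (𝒰 := 𝒰) (∑ j, (a : Fin n → ℝ) j • f j)
  simp only [hmk, hcoe] at h
  exact h

lemma exists_dist_normProfile_lt {n : ℕ} (v : Fin n → Ultrapower 𝒰 X) {δ : ℝ} (hδ : 0 < δ) :
    ∃ y : Fin n → X, dist (normProfile v) (normProfile y) < δ := by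
  choose f hf using fun j => Submodule.Quotient.mk_surjective _ (v j)
  obtain rfl := funext hf
  obtain ⟨i, hi⟩ := ((tendsto_normProfile f).eventually (ball_mem_nhds _ hδ)).exists
  refine ⟨fun j => f j i, ?_⟩
  rwa [dist_comm] at hi

lemma finitelyRepresentable_submodule (Y : Submodule ℝ (Ultrapower 𝒰 X)) :
    FinitelyRepresentable Y X :=
  .of_normProfile fun _ x _ hδ => by
    have hY := normProfile_comp_linearIsometry (Y.subtypeₗᵢ : Y →ₗᵢ[ℝ] Ultrapower 𝒰 X) x
    simpa only [hY] using exists_dist_normProfile_lt (Y.subtypeₗᵢ ∘ x) hδ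

-- The point indexed by `α` is the class of `E ↦ e (s_E α)`, where `e` is a bounded
-- `1`-separated sequence of `X` and `s_E : ι → ℕ` is injective on the finite set `E`.
lemma exists_bounded_separated (hX : ¬ FiniteDimensional ℝ X) (ι : Type*) :
    ∃ (R : ℝ) (y : ι → Ultrapower (.of (atTop : Filter (Finset ι))) X),
      (∀ α, ‖y α‖ ≤ R) ∧ Pairwise fun α β => 1 ≤ ‖y α - y β‖ := by
  classical
  obtain ⟨R, e, hR, heR, he⟩ := exists_seq_norm_le_one_le_norm_sub (𝕜 := ℝ) hX
  have hinj : ∀ E : Finset ι, ∃ s : ι → ℕ, InjOn s E := fun E => by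
    obtain ⟨s, -, hs⟩ := E.finite_toSet.exists_injOn_of_encard_le (t := (univ : Set ℕ)) (by simp)
    exact ⟨s, hs⟩
  choose s hs using hinj
  let y : ι → lp (fun _ : Finset ι => X) ∞ := fun α =>
    ⟨fun E => e (s E α), memℓp_infty ⟨R, by rintro _ ⟨E, rfl⟩; exact heR _⟩⟩
  refine ⟨R, fun α => Submodule.Quotient.mk (y α), fun α => ?_, fun α β hαβ => ?_⟩
  · exact (Submodule.Quotient.norm_mk_le _ _).trans
      (lp.norm_le_of_forall_le (by linarith) fun E => heR _)
  · dsimp only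
    rw [← Submodule.Quotient.mk_sub]
    refine ge_of_tendsto (tendsto_norm_mk _) ?_
    filter_upwards [Ultrafilter.of_le atTop (eventually_ge_atTop {α, β})] with E hE
    rw [lp.coeFn_sub, Pi.sub_apply]
    exact he ((hs E).ne (hE (by simp)) (hE (by simp)) hαβ)

end Ultrapower

section Dimension

open Cardinal Submodule

lemma mk_le_of_separated {E : Type u} [SeminormedAddCommGroup E] {ι : Type u} {y : ι → E}
    (hy : Pairwise fun α β => 1 ≤ ‖y α - y β‖) {D : Set E} (hD : range y ⊆ closure D) :
    #ι ≤ #D := by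
  choose d hdD hd using fun α => Metric.mem_closure_iff.1 (hD ⟨α, rfl⟩) (1 / 2) (by norm_num)
  refine mk_le_of_injective (f := fun α => (⟨d α, hdD α⟩ : D)) fun α β hαβ => ?_
  by_contra hne
  have hβ := hd β
  rw [Subtype.mk.injEq] at hαβ
  rw [← hαβ] at hβ
  linarith [hy hne, dist_triangle_right (y α) (y β) (d α), hd α, dist_eq_norm (y α) (y β)]

variable {Z : Type u} [NormedAddCommGroup Z] [NormedSpace ℝ Z]

lemma exists_span_subset_closure_mk_le (A : Set Z) :
    ∃ D : Set Z, (span ℝ A : Set Z) ⊆ closure D ∧ #D ≤ max ℵ₀ #A := by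
  have hsep : ∀ l : List A,
      TopologicalSpace.IsSeparable (span ℝ (((↑) : A → Z) '' {a | a ∈ l}) : Set Z) := fun l =>
    (l.finite_toSet.image _).countable.isSeparable.span
  choose D hDc hD using hsep
  refine ⟨⋃ l, D l, fun x hx => ?_, ?_⟩
  · obtain ⟨n, c, g, rfl⟩ := mem_span_set'.1 hx
    refine closure_mono (subset_iUnion D (List.ofFn g)) (hD _ ?_)
    exact sum_mem fun i _ => smul_mem _ _ (subset_span ⟨g i, by simp, rfl⟩)
  · calc #(⋃ l, D l) ≤ #(List A) * ⨆ l, #(D l) := mk_iUnion_le _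
      _ ≤ max ℵ₀ #A * ℵ₀ :=
        mul_le_mul' (mk_list_le_max _) (ciSup_le' fun l => mk_le_aleph0_iff.2 (hDc l).to_subtype)
      _ = max ℵ₀ #A := mul_aleph0_eq (le_max_left _ _)

lemma not_finiteDimensional_of_separated {ι : Type*} [Infinite ι] {y : ι → Z} {R : ℝ}
    (hyR : ∀ α, ‖y α‖ ≤ R) (hy : Pairwise fun α β => 1 ≤ ‖y α - y β‖) :
    ¬ FiniteDimensional ℝ Z := by
  intro hfin
  obtain ⟨t, htf, hcov⟩ := Metric.totallyBounded_iff.1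
    (isCompact_closedBall (0 : Z) R).totallyBounded (1 / 2) (by norm_num)
  choose c hct hc using fun α => mem_iUnion₂.1 (hcov (mem_closedBall_zero_iff.2 (hyR α)))
  have : Finite t := htf.to_subtype
  obtain ⟨α, β, hne, hαβ⟩ := Finite.exists_ne_map_eq_of_infinite fun α => (⟨c α, hct α⟩ : t)
  have hβ := mem_ball.1 (hc β)
  rw [Subtype.mk.injEq] at hαβ
  rw [← hαβ] at hβ
  linarith [hy hne, dist_triangle_right (y α) (y β) (c α), mem_ball.1 (hc α),
    dist_eq_norm (y α) (y β)]

lemma exists_dense_mk_le {A : Set Z} (hA : (span ℝ A).topologicalClosure = ⊤) :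
    ∃ D : Set Z, Dense D ∧ #D ≤ max ℵ₀ #A := by
  obtain ⟨D, hAD, hD⟩ := exists_span_subset_closure_mk_le A
  refine ⟨D, fun z => ?_, hD⟩
  have hz : z ∈ (span ℝ A).topologicalClosure := hA ▸ mem_top
  rw [← SetLike.mem_coe, topologicalClosure_coe] at hz
  exact closure_minimal hAD isClosed_closure hz

lemma finiteDimensional_of_topologicalClosure_span_eq_top {A : Set Z} (hAfin : A.Finite)
    (hA : (span ℝ A).topologicalClosure = ⊤) : FiniteDimensional ℝ Z := by
  have : FiniteDimensional ℝ (span ℝ A) := FiniteDimensional.span_of_finite ℝ hAfin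
  rw [(closed_of_finiteDimensional (span ℝ A)).submodule_topologicalClosure_eq] at hA
  exact ⟨hA ▸ fg_span hAfin⟩

lemma bdim_le_mk {A : Set Z} (hA : (span ℝ A).topologicalClosure = ⊤) : bdim Z ≤ #A :=
  csInf_le (OrderBot.bddBelow _) ⟨A, rfl, hA⟩

lemma bdim_eq_of_separated {κ : Cardinal.{u}} (hκ : ℵ₀ ≤ κ) {G : Set Z} (hGκ : #G ≤ κ)
    (hG : (span ℝ G).topologicalClosure = ⊤) {ι : Type u} (hι : #ι = κ) {y : ι → Z} {R : ℝ}
    (hyR : ∀ α, ‖y α‖ ≤ R) (hy : Pairwise fun α β => 1 ≤ ‖y α - y β‖) :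
    bdim Z = κ := by
  refine le_antisymm ((bdim_le_mk hG).trans hGκ) (le_csInf ⟨_, G, rfl, hG⟩ ?_)
  rintro _ ⟨A, rfl, hA⟩
  obtain ⟨D, hD, hDA⟩ := exists_dense_mk_le hA
  have hκD : κ ≤ #D := hι ▸ mk_le_of_separated hy fun _ _ => hD _
  rcases lt_or_ge #A ℵ₀ with hAfin | hAinf
  · have : Infinite ι := infinite_iff.2 (hι ▸ hκ)
    exact absurd (finiteDimensional_of_topologicalClosure_span_eq_top
      (lt_aleph0_iff_set_finite.1 hAfin) hA) (not_finiteDimensional_of_separated hyR hy)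
  · exact hκD.trans (hDA.trans_eq (max_eq_right hAinf))

lemma separableSpace_of_bdim_le_aleph0 (h : bdim Z ≤ ℵ₀) :
    TopologicalSpace.SeparableSpace Z := by
  obtain ⟨A, hAcard, hA⟩ : bdim Z ∈ {c : Cardinal.{u} | ∃ A : Set Z, #A = c ∧
      (span ℝ A).topologicalClosure = ⊤} :=
    csInf_mem ⟨_, univ, rfl, by rw [span_univ]; exact eq_top_iff.2 (le_topologicalClosure _)⟩
  obtain ⟨D, hD, hDA⟩ := exists_dense_mk_le hA
  exact ⟨D, mk_le_aleph0_iff.1 (hDA.trans (max_le le_rfl (hAcard ▸ h))), hD⟩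

end Dimension

lemma Submodule.topologicalClosure_span_preimage_coe_eq_top {W : Type*} [NormedAddCommGroup W]
    [NormedSpace ℝ W] {S : Set W} {Y : Submodule ℝ W} (hSY : S ⊆ Y)
    (hY : Y ≤ (span ℝ S).topologicalClosure) :
    (span ℝ (((↑) : Y → W) ⁻¹' S)).topologicalClosure = ⊤ := by
  rw [← dense_iff_topologicalClosure_eq_top, Subtype.dense_iff]
  have himage : ((↑) '' (span ℝ (((↑) : Y → W) ⁻¹' S) : Set Y)) = (span ℝ S : Set W) := by
    rw [← Y.coe_subtype, ← map_coe, map_span, coe_subtype,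
      image_preimage_eq_of_subset (by rwa [Subtype.range_coe])]
  have h := SetLike.coe_subset_coe.2 hY
  rwa [topologicalClosure_coe, ← himage] at h

open Cardinal Submodule in
theorem exists_finitelyEquivalent_bdim_eq {X : Type u} [NormedAddCommGroup X] [NormedSpace ℝ X]
    [CompleteSpace X] (hX : ¬ FiniteDimensional ℝ X) {κ : Cardinal.{u}} (hκ : ℵ₀ ≤ κ) :
    ∃ Y : BanachSpace.{u}, bdim Y.carrier = κ ∧ FinitelyEquivalent X Y.carrier := by
  obtain ⟨R, y, hyR, hy⟩ := Ultrapower.exists_bounded_separated hX κ.out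
  obtain ⟨C, hCc, hC⟩ := exists_countable_forall_dist_normProfile_lt X
  let S := Ultrapower.diag _ X '' C ∪ range y
  let Y := (span ℝ S).topologicalClosure
  have hSY : S ⊆ Y := fun s hs => le_topologicalClosure _ (subset_span hs)
  have : CompleteSpace Y := (isClosed_topologicalClosure _).completeSpace_coe
  have hS : #S ≤ κ := calc
    #S ≤ #(Ultrapower.diag _ X '' C) + #(range y) := mk_union_le _ _
    _ ≤ ℵ₀ + κ := add_le_add (mk_le_aleph0_iff.2 (hCc.image _).to_subtype)
      (mk_range_le.trans_eq (mk_out κ))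
    _ = κ := add_eq_right hκ hκ
  refine ⟨⟨Y⟩, ?_, .of_normProfile fun n x δ hδ => ?_,
    Ultrapower.finitelyRepresentable_submodule Y⟩
  · exact bdim_eq_of_separated hκ
      ((mk_preimage_of_injective _ _ Subtype.val_injective).trans hS)
      (topologicalClosure_span_preimage_coe_eq_top hSY le_rfl) (mk_out κ)
      (y := fun α => ⟨y α, hSY (.inr ⟨α, rfl⟩)⟩) hyR hy
  · obtain ⟨t, htC, ht⟩ := hC n x δ hδ
    let z : Fin n → Y := fun j => ⟨Ultrapower.diag _ X (t j), hSY (.inl ⟨t j, htC j, rfl⟩)⟩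
    have hz := normProfile_comp_linearIsometry Y.subtypeₗᵢ z
    refine ⟨z, ?_⟩
    rw [← normProfile_comp_linearIsometry (Ultrapower.diag _ X) t] at ht
    rwa [← hz]

/-- Every infinite-dimensional Banach space is finitely equivalent to a
Banach space of any prescribed infinite dimension `κ`; in particular it is finitely
equivalent to a separable Banach space. -/
theorem exists_finitelyEquivalent_of_dim
    (X : Type u) [NormedAddCommGroup X] [NormedSpace ℝ X] [CompleteSpace X]
    (hinf : ¬ FiniteDimensional ℝ X) :
    (∀ κ : Cardinal.{u}, Cardinal.aleph0 ≤ κ →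
      ∃ Y : BanachSpace.{u}, bdim Y.carrier = κ ∧ FinitelyEquivalent X Y.carrier) ∧
    (∃ Y : BanachSpace.{u}, TopologicalSpace.SeparableSpace Y.carrier ∧
      FinitelyEquivalent X Y.carrier) := by
  have hdim : ∀ κ : Cardinal.{u}, Cardinal.aleph0 ≤ κ →
      ∃ Y : BanachSpace.{u}, bdim Y.carrier = κ ∧ FinitelyEquivalent X Y.carrier :=
    fun _ hκ => exists_finitelyEquivalent_bdim_eq hinf hκ
  obtain ⟨Y, hY, hXY⟩ := hdim _ le_rfl
  exact ⟨hdim, Y, separableSpace_of_bdim_le_aleph0 hY.le, hXY⟩
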